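/- The projector onto the symmetric subspace of (ℂ²)^⊗4 equals (15/48)(I + (1/3)∑_{pairs (i,j)} σᵢ·σⱼ + (1/15)∑_{pairings {(i,j),(k,l)}} (σᵢ·σⱼ)(σₖ·σₗ)), where the first sum runs over the 6 unordered pairs {i,j} ⊆ {1,2,3,4} and the second over the 3 perfect matchings of {1,2,3,4}. -/

import Mathlib

open Matrix

/-- The three Pauli matrices. -/
noncomputable def pauli : Fin 3 → Matrix (Fin 2) (Fin 2) ℂ :=
  ![!![0, 1; 1, 0], !![0, -Complex.I; Complex.I, 0], !![1, 0; 0, -1]]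

/-- The operator on (ℂ^d)^⊗n permuting tensor factors according to π:
it sends `e_{i₁} ⊗ ... ⊗ e_{i_n}` to `e_{i_{π⁻¹(1)}} ⊗ ... ⊗ e_{i_{π⁻¹(n)}}`. -/
noncomputable def permOp (d n : ℕ) (π : Equiv.Perm (Fin n)) :
    Matrix (Fin n → Fin d) (Fin n → Fin d) ℂ :=
  Matrix.of fun f g => if f = g ∘ ⇑π⁻¹ then 1 else 0

/-- The one-site operator acting as the 2×2 matrix `A` on tensor factor `i`
of (ℂ²)^⊗n and as the identity elsewhere. -/
noncomputable def opAt {n : ℕ} (i : Fin n) (A : Matrix (Fin 2) (Fin 2) ℂ) :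
    Matrix (Fin n → Fin 2) (Fin n → Fin 2) ℂ :=
  Matrix.of fun f g => ∏ k, if k = i then A (f k) (g k) else (if f k = g k then 1 else 0)

/-- σᵢ·σⱼ = ∑_{a ∈ {x,y,z}} (σᵃ at leg i)(σᵃ at leg j) on (ℂ²)^⊗n. -/
noncomputable def sdot {n : ℕ} (i j : Fin n) :
    Matrix (Fin n → Fin 2) (Fin n → Fin 2) ℂ :=
  ∑ a : Fin 3, opAt i (pauli a) * opAt j (pauli a)

/-!
By the Pauli completeness relation `∑ₐ σᵃ ⊗ σᵃ = 2 SWAP - 1`, each `σᵢ·σⱼ` is `2 (i j) - 1`, and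
the right-hand side becomes `(1/24) (-6 + 4 ∑ (i j) + 2 ∑ (i j)(k l))`. The 3- and 4-cycles
missing from it are accounted for by the fact that `ℂ²` is two-dimensional: the antisymmetrisers
`A_S` on any three or four tensor factors vanish, and in the group ring of `S₄`
`∑ π = -6 + 4 ∑ (i j) + 2 ∑ (i j)(k l) - A_{1234} + 2 ∑_{|S| = 3} A_S`,
which is checked coefficientwise.
-/

open Equiv Finset

section PermOp

variable {d n : ℕ}

theorem permOp_apply (π : Perm (Fin n)) (f g : Fin n → Fin d) :
    permOp d n π f g = if f = g ∘ ⇑π⁻¹ then 1 else 0 := rfl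

theorem permOp_one : permOp d n 1 = 1 := by
  ext f g
  simp [permOp_apply, Matrix.one_apply]

theorem permOp_mul (σ τ : Perm (Fin n)) : permOp d n (σ * τ) = permOp d n σ * permOp d n τ := by
  ext f g
  rw [Matrix.mul_apply, Fintype.sum_eq_single (g ∘ ⇑τ⁻¹)]
  · simp [permOp_apply, Function.comp_assoc]
  · intro h hne
    rw [permOp_apply τ, if_neg hne, mul_zero]

theorem permOp_mul_swap_apply (π : Perm (Fin n)) {i j : Fin n} {f g : Fin n → Fin d}
    (hg : g i = g j) : permOp d n (π * swap i j) f g = permOp d n π f g := by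
  have : g ∘ ⇑(swap i j) = g := by
    ext k
    rcases eq_or_ne k i with rfl | hki
    · simp [hg]
    rcases eq_or_ne k j with rfl | hkj
    · simp [hg]
    · simp [swap_apply_of_ne_of_ne hki hkj]
  simp [permOp_apply, ← Function.comp_assoc, this]

/-- The unnormalised antisymmetriser of the tensor factors in `S`. -/
noncomputable def antisymmetrizerOn (d n : ℕ) (S : Finset (Fin n)) :
    Matrix (Fin n → Fin d) (Fin n → Fin d) ℂ :=
  ∑ π with π.support ⊆ S, (Perm.sign π : ℤ) • permOp d n π

theorem antisymmetrizerOn_eq_zero {S : Finset (Fin n)} (hS : d < #S) :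
    antisymmetrizerOn d n S = 0 := by
  ext f g
  obtain ⟨i, hi, j, hj, hij, hg⟩ := exists_ne_map_eq_of_card_lt_of_maps_to
    (t := univ) (by simpa using hS) (fun k _ => mem_univ (g k))
  simp only [antisymmetrizerOn, Matrix.sum_apply, Matrix.smul_apply, Matrix.zero_apply]
  -- `π ↦ π * swap i j` flips the sign and, as `g i = g j`, fixes the `(f, g)` entry.
  refine sum_involution (fun π _ => π * swap i j) (fun π _ => ?_) (fun π _ _ => ?_)
    (fun π hπ => ?_) (fun π _ => mul_swap_mul_self i j π)
  · rw [permOp_mul_swap_apply π hg, Perm.sign_mul, Perm.sign_swap hij]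
    simp
  · simpa [swap_eq_one_iff] using hij
  · rw [mem_filter] at hπ ⊢
    refine ⟨mem_univ _, (Perm.support_mul_le _ _).trans (sup_le hπ.2 ?_)⟩
    rw [Perm.support_swap hij]
    exact insert_subset hi (singleton_subset_iff.mpr hj)

theorem sum_antisymmetrizerOn (𝒮 : Finset (Finset (Fin n))) :
    ∑ S ∈ 𝒮, antisymmetrizerOn d n S
      = ∑ π, (Perm.sign π * #{S ∈ 𝒮 | π.support ⊆ S} : ℤ) • permOp d n π := by
  simp only [antisymmetrizerOn, sum_filter]
  rw [sum_comm]
  refine sum_congr rfl fun π _ => ?_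
  rw [card_filter, Nat.cast_sum, mul_sum, sum_smul]
  refine sum_congr rfl fun S _ => ?_
  split_ifs <;> simp

end PermOp

section OpAt

variable {n : ℕ}

theorem opAt_apply (i : Fin n) (A : Matrix (Fin 2) (Fin 2) ℂ) (f g : Fin n → Fin 2) :
    opAt i A f g = if ∀ k ≠ i, f k = g k then A (f i) (g i) else 0 := by
  rw [opAt, of_apply, Fintype.prod_eq_mul_prod_compl i, if_pos rfl,
    prod_congr rfl fun k hk => if_neg (by simpa using hk), prod_boole]
  simp

theorem opAt_mul_opAt_apply {i j : Fin n} (hij : i ≠ j) (A B : Matrix (Fin 2) (Fin 2) ℂ)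
    (f g : Fin n → Fin 2) :
    (opAt i A * opAt j B) f g
      = if ∀ k, k ≠ i → k ≠ j → f k = g k then A (f i) (g i) * B (f j) (g j) else 0 := by
  rw [mul_apply, Fintype.sum_eq_single (Function.update f i (g i))]
  · simp only [opAt_apply, Function.update_self, Function.update_of_ne hij.symm]
    have hf : ∀ k ≠ i, f k = Function.update f i (g i) k :=
      fun k hk => (Function.update_of_ne hk _ _).symm
    have hg : (∀ k ≠ j, Function.update f i (g i) k = g k) ↔
        ∀ k, k ≠ i → k ≠ j → f k = g k := by
      refine forall_congr' fun k => ?_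
      rcases eq_or_ne k i with rfl | hki
      · simp [hij]
      · simp [hki]
    simp only [if_pos hf, hg, mul_ite, mul_zero]
  · intro h hne
    obtain ⟨k, hk⟩ := Function.ne_iff.mp hne
    rcases eq_or_ne k i with rfl | hki
    · rw [Function.update_self] at hk
      rw [opAt_apply j, if_neg fun hh => hk (hh k hij), mul_zero]
    · rw [Function.update_of_ne hki] at hk
      rw [opAt_apply i, if_neg fun hh => hk (hh k hki).symm, zero_mul]

theorem sdot_apply {i j : Fin n} (hij : i ≠ j) (f g : Fin n → Fin 2) :
    sdot i j f g = if ∀ k, k ≠ i → k ≠ j → f k = g k then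
      ∑ a, pauli a (f i) (g i) * pauli a (f j) (g j) else 0 := by
  simp only [sdot, Matrix.sum_apply, opAt_mul_opAt_apply hij, sum_ite_irrel, sum_const_zero]

end OpAt

/-- The Pauli completeness relation `∑ₐ σᵃ ⊗ σᵃ = 2 SWAP - 1`, in coordinates. -/
theorem sum_pauli_mul_pauli (x u y v : Fin 2) :
    ∑ a, pauli a x u * pauli a y v
      = 2 * ((if x = v then 1 else 0) * (if y = u then 1 else 0))
        - (if x = u then 1 else 0) * (if y = v then 1 else 0) := by
  fin_cases x <;> fin_cases u <;> fin_cases y <;> fin_cases v <;>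
    simp [pauli, Fin.sum_univ_three] <;> ring_nf

theorem eq_iff_of_forall_ne_ne {α : Type*} {n : ℕ} {i j : Fin n} {f g : Fin n → α}
    (h : ∀ k, k ≠ i → k ≠ j → f k = g k) : f = g ↔ f i = g i ∧ f j = g j := by
  refine ⟨fun hfg => hfg ▸ ⟨rfl, rfl⟩, fun ⟨hi, hj⟩ => funext fun k => ?_⟩
  rcases eq_or_ne k i with rfl | hki
  · exact hi
  rcases eq_or_ne k j with rfl | hkj
  · exact hj
  · exact h k hki hkj

theorem sdot_eq_two_smul_permOp_swap_sub_one {n : ℕ} {i j : Fin n} (hij : i ≠ j) :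
    sdot i j = (2 : ℂ) • permOp 2 n (swap i j) - 1 := by
  ext f g
  rw [sdot_apply hij, Matrix.sub_apply, Matrix.smul_apply, permOp_apply, one_apply, swap_inv,
    smul_eq_mul]
  by_cases hfg : ∀ k, k ≠ i → k ≠ j → f k = g k
  · have hfg' : ∀ k, k ≠ i → k ≠ j → f k = (g ∘ swap i j) k := fun k hki hkj => by
      simpa [swap_apply_of_ne_of_ne hki hkj] using hfg k hki hkj
    rw [if_pos hfg, sum_pauli_mul_pauli]
    simp only [eq_iff_of_forall_ne_ne hfg, eq_iff_of_forall_ne_ne hfg', Function.comp_apply,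
      swap_apply_left, swap_apply_right, ite_zero_mul_ite_zero, mul_one]
  · have hswap : f ≠ g ∘ swap i j := fun h => hfg fun k hki hkj => by
      simp [h, swap_apply_of_ne_of_ne hki hkj]
    have hid : f ≠ g := fun h => hfg fun k _ _ => h ▸ rfl
    simp [hfg, hswap, hid]

theorem sdot_mul_sdot {n : ℕ} {i j k l : Fin n} (hij : i ≠ j) (hkl : k ≠ l) :
    sdot i j * sdot k l = (4 : ℂ) • permOp 2 n (swap i j * swap k l)
      - (2 : ℂ) • permOp 2 n (swap i j) - (2 : ℂ) • permOp 2 n (swap k l) + 1 := by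
  rw [sdot_eq_two_smul_permOp_swap_sub_one hij, sdot_eq_two_smul_permOp_swap_sub_one hkl,
    permOp_mul]
  simp only [sub_mul, mul_sub, one_mul, mul_one, smul_mul_assoc, mul_smul_comm]
  module

theorem sum_permOp_two_four : ∑ π, permOp 2 4 π
    = (-6 : ℤ) • 1 + (4 : ℤ) • (permOp 2 4 (swap 0 1) + permOp 2 4 (swap 0 2)
        + permOp 2 4 (swap 0 3) + permOp 2 4 (swap 1 2) + permOp 2 4 (swap 1 3)
        + permOp 2 4 (swap 2 3))
      + (2 : ℤ) • (permOp 2 4 (swap 0 1 * swap 2 3) + permOp 2 4 (swap 0 2 * swap 1 3)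
        + permOp 2 4 (swap 0 3 * swap 1 2)) := by
  have hcoeff : ∀ π : Perm (Fin 4), (1 : ℤ) = -6 * (if π = 1 then 1 else 0)
      + 4 * ((if π = swap 0 1 then 1 else 0) + (if π = swap 0 2 then 1 else 0)
        + (if π = swap 0 3 then 1 else 0) + (if π = swap 1 2 then 1 else 0)
        + (if π = swap 1 3 then 1 else 0) + (if π = swap 2 3 then 1 else 0))
      + 2 * ((if π = swap 0 1 * swap 2 3 then 1 else 0) + (if π = swap 0 2 * swap 1 3 then 1 else 0)
        + (if π = swap 0 3 * swap 1 2 then 1 else 0))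
      - Perm.sign π + 2 * (Perm.sign π * #{S ∈ powersetCard 3 univ | π.support ⊆ S}) := by
    decide
  have hA4 : ∑ π, (Perm.sign π : ℤ) • permOp 2 4 π = 0 := by
    simpa [antisymmetrizerOn] using antisymmetrizerOn_eq_zero (d := 2) (S := univ) (by simp)
  have hA3 : ∑ π, (Perm.sign π * #{S ∈ powersetCard 3 univ | π.support ⊆ S} : ℤ)
      • permOp 2 4 π = 0 := by
    rw [← sum_antisymmetrizerOn]
    exact sum_eq_zero fun S hS => antisymmetrizerOn_eq_zero (by simp [(mem_powersetCard.1 hS).2])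
  conv_lhs => enter [2, π]; rw [← one_smul ℤ (permOp 2 4 π), hcoeff π]
  simp only [add_smul, sub_smul, mul_smul (-6 : ℤ), mul_smul (4 : ℤ), mul_smul (2 : ℤ),
    sum_add_distrib, sum_sub_distrib, ← smul_sum, hA4, hA3, ite_smul, one_smul, zero_smul,
    sum_ite_eq', mem_univ, if_true, permOp_one]
  abel

theorem symProj4_eq_pauli_expansion :
    (1/24 : ℂ) • ∑ π : Equiv.Perm (Fin 4), permOp 2 4 π
      = (15/48 : ℂ) • ((1 : Matrix (Fin 4 → Fin 2) (Fin 4 → Fin 2) ℂ)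
          + (1/3 : ℂ) • (sdot 0 1 + sdot 0 2 + sdot 0 3 + sdot 1 2 + sdot 1 3 + sdot 2 3)
          + (1/15 : ℂ) • (sdot 0 1 * sdot 2 3 + sdot 0 2 * sdot 1 3 + sdot 0 3 * sdot 1 2)) := by
  rw [sdot_mul_sdot (by decide) (by decide), sdot_mul_sdot (by decide) (by decide),
    sdot_mul_sdot (by decide) (by decide)]
  simp (disch := decide) only [sdot_eq_two_smul_permOp_swap_sub_one]
  rw [sum_permOp_two_four]
  module
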